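/- In the CK graph CK(r, g) with g ≥ 2, if w_B < 2·w_A, then V_A is the unique maximum-weight independent set; its weight 2g·w_A is strictly greater than the weight of every other independent set. -/

import Mathlib

open Finset

/-- Vertex type of the CK graph `CK(r,g)`: `V_A` = `g` groups of 2 vertices (left),
`V_B` = `g` cliques of `r` vertices (right). -/
abbrev CKV (r g : ℕ) := (Fin g × Fin 2) ⊕ (Fin g × Fin r)

/-- The CK graph `CK(r,g)`: no edges inside `V_A`; each `r`-clique of `V_B` is complete;
a vertex of group `k` of `V_A` is adjacent to every vertex of every clique of `V_B`
except clique `k`; no edges between distinct cliques of `V_B`. -/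
def CKGraph (r g : ℕ) : SimpleGraph (CKV r g) where
  Adj u v :=
    match u, v with
    | Sum.inl _, Sum.inl _ => False
    | Sum.inl a, Sum.inr b => a.1 ≠ b.1
    | Sum.inr a, Sum.inl b => b.1 ≠ a.1
    | Sum.inr a, Sum.inr b => a.1 = b.1 ∧ a.2 ≠ b.2
  symm := by
    refine ⟨?_⟩
    rintro (⟨k, a⟩ | ⟨k, a⟩) (⟨l, b⟩ | ⟨l, b⟩) h
    · exact h
    · exact h
    · exact h
    · exact ⟨h.1.symm, h.2.symm⟩
  loopless := by
    refine ⟨?_⟩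
    rintro (⟨k, a⟩ | ⟨k, a⟩) h
    · exact h
    · exact h.2 rfl

/-- `S` is an independent set of `CK(r,g)`. -/
def CKIndep {r g : ℕ} (S : Finset (CKV r g)) : Prop :=
  ∀ u ∈ S, ∀ v ∈ S, ¬ (CKGraph r g).Adj u v

/-- `S` is a maximal independent set of `CK(r,g)`. -/
def CKMaxIndep {r g : ℕ} (S : Finset (CKV r g)) : Prop :=
  CKIndep S ∧ ∀ v : CKV r g, CKIndep (insert v S) → v ∈ S

/-- The total weight of `S`, where `V_A`-vertices weigh `wA` and `V_B`-vertices weigh `wB`. -/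
def CKwt {r g : ℕ} (wA wB : ℝ) (S : Finset (CKV r g)) : ℝ :=
  ∑ v ∈ S, Sum.elim (fun _ => wA) (fun _ => wB) v

/-- The set `V_A` of the CK graph, as a `Finset`. -/
def VA (r g : ℕ) : Finset (CKV r g) :=
  (Finset.univ : Finset (Fin g × Fin 2)).image Sum.inl

/-- For `f : Fin g → Fin r`, the selection `S_f` consisting of the `f k`-th vertex of
clique `k` of `V_B`, for each `k`. -/
def Sf {r g : ℕ} (f : Fin g → Fin r) : Finset (CKV r g) :=
  (Finset.univ : Finset (Fin g)).image (fun k => Sum.inr (k, f k))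

/-! An independent set `S` of `CK(r,g)` has at most one vertex in each clique of `V_B`, and a
`V_B`-vertex in clique `k` confines the `V_A`-part of `S` to group `k`. So if `S` meets `V_B`,
either it avoids `V_A` and weighs at most `g·w_B < 2g·w_A`, or it meets `V_A`, lies inside group `k`
and clique `k`, and weighs at most `2w_A + w_B < 4w_A ≤ 2g·w_A`. If `S` avoids `V_B`, it is a proper
subset of `V_A`. -/

section

variable {r g : ℕ}

lemma ckwt_eq (wA wB : ℝ) (S : Finset (CKV r g)) :
    CKwt wA wB S = #S.toLeft * wA + #S.toRight * wB := by
  simp [CKwt, sum_sum_eq_sum_toLeft_add_sum_toRight]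

lemma VA_eq_map_inl : VA r g = univ.map .inl := by
  rw [map_eq_image]; rfl

@[simp] lemma toLeft_VA : (VA r g).toLeft = univ := by
  ext; simp [VA]

@[simp] lemma toRight_VA : (VA r g).toRight = ∅ := by
  ext; simp [VA]

lemma card_VA : #(VA r g) = 2 * g := by
  simp [← card_toLeft_add_card_toRight, mul_comm]

lemma ckIndep_VA : CKIndep (VA r g) := by
  simp only [CKIndep, VA, mem_image, mem_univ, true_and]
  rintro _ ⟨a, rfl⟩ _ ⟨b, rfl⟩
  exact id

lemma ckwt_VA (wA wB : ℝ) : CKwt wA wB (VA r g) = 2 * g * wA := by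
  simp [ckwt_eq, mul_comm]

variable {S : Finset (CKV r g)}

lemma card_toLeft_lt_of_toRight_eq_empty (hB : S.toRight = ∅) (hne : S ≠ VA r g) :
    #S.toLeft < 2 * g := by
  have hsub : S ⊂ VA r g :=
    (VA_eq_map_inl ▸ subset_map_inl.2 ⟨subset_univ _, hB⟩ : S ⊆ VA r g).ssubset_of_ne hne
  have hlt := card_lt_card hsub
  rwa [card_VA, ← card_toLeft_add_card_toRight, hB, card_empty, add_zero] at hlt

lemma CKIndep.fst_injOn_toRight (hS : CKIndep S) :
    Set.InjOn Prod.fst (S.toRight : Set (Fin g × Fin r)) := by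
  intro x hx y hy hxy
  by_contra hne
  exact hS _ (mem_toRight.1 hx) _ (mem_toRight.1 hy) ⟨hxy, fun h => hne (Prod.ext hxy h)⟩

lemma CKIndep.card_toRight_le (hS : CKIndep S) : #S.toRight ≤ g :=
  (card_le_card_of_injOn Prod.fst (fun _ _ => mem_univ _) hS.fst_injOn_toRight).trans_eq
    (card_fin g)

lemma CKIndep.fst_eq_of_mem_toLeft_of_mem_toRight (hS : CKIndep S) {a : Fin g × Fin 2}
    {b : Fin g × Fin r} (ha : a ∈ S.toLeft) (hb : b ∈ S.toRight) : a.1 = b.1 := by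
  by_contra h
  exact hS _ (mem_toLeft.1 ha) _ (mem_toRight.1 hb) h

lemma CKIndep.card_toLeft_le_two (hS : CKIndep S) {b : Fin g × Fin r} (hb : b ∈ S.toRight) :
    #S.toLeft ≤ 2 := by
  have hinj : Set.InjOn Prod.snd (S.toLeft : Set (Fin g × Fin 2)) := fun x hx y hy hxy =>
    Prod.ext ((hS.fst_eq_of_mem_toLeft_of_mem_toRight hx hb).trans
      (hS.fst_eq_of_mem_toLeft_of_mem_toRight hy hb).symm) hxy
  simpa using card_le_card_of_injOn Prod.snd (fun _ _ => mem_univ _) hinj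

lemma CKIndep.card_toRight_le_one (hS : CKIndep S) {a : Fin g × Fin 2} (ha : a ∈ S.toLeft) :
    #S.toRight ≤ 1 :=
  card_le_one.2 fun _ hx _ hy => hS.fst_injOn_toRight hx hy <|
    (hS.fst_eq_of_mem_toLeft_of_mem_toRight ha hx).symm.trans
      (hS.fst_eq_of_mem_toLeft_of_mem_toRight ha hy)

end

theorem stmt10_general (r g : ℕ) (hg : 2 ≤ g)
    (wA wB : ℝ) (hwA : 0 < wA) (hwB : 0 < wB) (h : wB < 2 * wA) :
    CKIndep (VA r g) ∧ CKwt wA wB (VA r g) = 2 * g * wA ∧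
      ∀ S : Finset (CKV r g), CKIndep S → S ≠ VA r g →
        CKwt wA wB S < 2 * g * wA := by
  refine ⟨ckIndep_VA, ckwt_VA wA wB, fun S hS hne => ?_⟩
  rw [ckwt_eq]
  have hg' : (2 : ℝ) ≤ g := by exact_mod_cast hg
  rcases S.toRight.eq_empty_or_nonempty with hB | ⟨b, hb⟩
  · have hA : (#S.toLeft : ℝ) < 2 * g := by
      exact_mod_cast card_toLeft_lt_of_toRight_eq_empty hB hne
    simp only [hB, card_empty, CharP.cast_eq_zero, zero_mul, add_zero]
    nlinarith
  rcases S.toLeft.eq_empty_or_nonempty with hA | ⟨a, ha⟩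
  · have hB : (#S.toRight : ℝ) ≤ g := by exact_mod_cast hS.card_toRight_le
    simp only [hA, card_empty, CharP.cast_eq_zero, zero_mul, zero_add]
    nlinarith
  · have hA : (#S.toLeft : ℝ) ≤ 2 := by exact_mod_cast hS.card_toLeft_le_two hb
    have hB : (#S.toRight : ℝ) ≤ 1 := by exact_mod_cast hS.card_toRight_le_one ha
    nlinarith

theorem stmt10 (r g : ℕ) (hr : 1 ≤ r) (hg : 2 ≤ g)
    (wA wB : ℝ) (hwA : 0 < wA) (hwB : 0 < wB) (h : wB < 2 * wA) :
    CKIndep (VA r g) ∧ CKwt wA wB (VA r g) = 2 * g * wA ∧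
      ∀ S : Finset (CKV r g), CKIndep S → S ≠ VA r g →
        CKwt wA wB S < 2 * g * wA :=
  stmt10_general r g hg wA wB hwA hwB h
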